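/- arXiv:math/0504512 — 2 statements merged into one kernel-verified Lean document; each statement's English description precedes it below -/
import Mathlib

section
/- Let ψ: X × Θ → R^m with Θ ⊂ R^k open, and fix θ_0 ∈ Θ. Suppose X_1, X_2, ... are i.i.d. with law P_{θ_0}, E_{θ_0} |ψ(X_1; θ_0 + ε) - ψ(X_1; θ_0)|^2 → 0 as ε → 0, and the map ε ↦ E_{θ_0} ψ(X_1; θ_0 + ε) is differentiable at 0 with derivative matrix c. Then for any sequence θ_n with √n(θ_n - θ_0) bounded, n^{-1/2} ∑_{i=1}^n ψ(X_i; θ_n) - n^{-1/2} ∑_{i=1}^n ψ(X_i; θ_0) - c √n(θ_n - θ_0) → 0 in probability under P_{θ_0}. -/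
/-!
With `g_n = ψ(·; θ_n) - ψ(·; θ₀)`, the error term splits as
`n^{-1/2} ∑ᵢ (g_n(Xᵢ) - E g_n) + √n (E g_n - c (θ_n - θ₀))`.
Independence kills the cross terms, so the centred sum has second moment `n Var g_n ≤ n E‖g_n‖²`
and the first term tends to `0` in `L²`. The second term is deterministic and tends to `0`
because `√n (θ_n - θ₀)` stays bounded while the mean is differentiable at `θ₀`. Convergence in
`L²` implies convergence in probability.
-/

open MeasureTheory Filter Finset ProbabilityTheory
open scoped Topology

section Analysis

variable {ι E F : Type*} [NormedAddCommGroup E] [NormedSpace ℝ E]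
  [NormedAddCommGroup F] [NormedSpace ℝ F] {l : Filter ι}

theorem tendsto_of_isBoundedUnder_norm_smul_sub {r : ι → ℝ} {u : ι → E} {x : E}
    (hr : Tendsto r l atTop) (hbdd : IsBoundedUnder (· ≤ ·) l fun i => ‖r i • (u i - x)‖) :
    Tendsto u l (𝓝 x) := by
  have hsub : Tendsto (fun i => (r i)⁻¹ • (r i • (u i - x))) l (𝓝 0) :=
    (tendsto_inv_atTop_zero.comp hr).zero_smul_isBoundedUnder_le hbdd
  have hpos : ∀ᶠ i in l, r i ≠ 0 := (hr.eventually_gt_atTop 0).mono fun i hi => hi.ne'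
  refine tendsto_sub_nhds_zero_iff.1 (hsub.congr' ?_)
  filter_upwards [hpos] with i hi
  rw [inv_smul_smul₀ hi]

theorem HasFDerivAt.tendsto_smul_sub_sub {f : E → F} {f' : E →L[ℝ] F} {x : E}
    (hf : HasFDerivAt f f' x) {r : ι → ℝ} {u : ι → E} (hu : Tendsto u l (𝓝 x))
    (hbdd : IsBoundedUnder (· ≤ ·) l fun i => ‖r i • (u i - x)‖) :
    Tendsto (fun i => r i • (f (u i) - f x - f' (u i - x))) l (𝓝 0) := by
  have hrem := (Asymptotics.isBigO_refl r l).smul_isLittleO (hf.isLittleO.comp_tendsto hu)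
  exact (Asymptotics.isLittleO_one_iff ℝ).1 <|
    hrem.trans_isBigO (Asymptotics.isBigO_one_iff (F := ℝ) |>.2 hbdd)

end Analysis

theorem tendstoInMeasure_zero_of_tendsto_integral_norm_sq {ι Ω E : Type*} [MeasurableSpace Ω]
    [NormedAddCommGroup E] {μ : Measure Ω} {l : Filter ι} {F : ι → Ω → E}
    (hF : ∀ n, MemLp (F n) 2 μ) (h : Tendsto (fun n => ∫ ω, ‖F n ω‖ ^ 2 ∂μ) l (𝓝 0)) :
    TendstoInMeasure μ F l 0 := by
  refine tendstoInMeasure_of_tendsto_eLpNorm two_ne_zero (fun n => (hF n).1)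
    aestronglyMeasurable_const ?_
  have hsqrt : Tendsto (fun n => ENNReal.ofReal ((∫ ω, ‖F n ω‖ ^ 2 ∂μ) ^ (2 : ℝ)⁻¹)) l (𝓝 0) := by
    simpa using ENNReal.tendsto_ofReal (h.rpow_const (p := (2 : ℝ)⁻¹) (Or.inr (by norm_num)))
  refine hsqrt.congr fun n => ?_
  rw [sub_zero, (hF n).eLpNorm_eq_integral_rpow_norm two_ne_zero ENNReal.ofNat_ne_top]
  norm_num

theorem integral_comp_of_map_eq {Ω α E : Type*} [MeasurableSpace Ω] [MeasurableSpace α]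
    [NormedAddCommGroup E] [NormedSpace ℝ E] {P : Measure Ω} {ν : Measure α} {Z : Ω → α}
    (hZ : Measurable Z) (hlaw : P.map Z = ν) {g : α → E} (hg : AEStronglyMeasurable g ν) :
    ∫ ω, g (Z ω) ∂P = ∫ x, g x ∂ν := by
  subst hlaw
  exact (integral_map hZ.aemeasurable hg).symm

section Probability

variable {Ω α ι E : Type*} [MeasurableSpace Ω] [MeasurableSpace α]
  [NormedAddCommGroup E] [InnerProductSpace ℝ E]

theorem integral_norm_add_const_sq [CompleteSpace E] {μ : Measure Ω} [IsProbabilityMeasure μ]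
    {Y : Ω → E} (hY : MemLp Y 2 μ) (hY0 : ∫ ω, Y ω ∂μ = 0) (d : E) :
    ∫ ω, ‖Y ω + d‖ ^ 2 ∂μ = ∫ ω, ‖Y ω‖ ^ 2 ∂μ + ‖d‖ ^ 2 := by
  have hYsq : Integrable (fun ω => ‖Y ω‖ ^ 2) μ :=
    (memLp_two_iff_integrable_sq_norm hY.1).1 hY
  have hinner : Integrable (fun ω => 2 * inner ℝ d (Y ω)) μ :=
    ((hY.integrable one_le_two).const_inner d).const_mul 2
  have hexpand : ∀ ω, ‖Y ω + d‖ ^ 2 = ‖Y ω‖ ^ 2 + 2 * inner ℝ d (Y ω) + ‖d‖ ^ 2 := fun ω => by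
    rw [norm_add_sq_real, real_inner_comm]
  simp_rw [hexpand]
  rw [integral_add (f := fun ω => ‖Y ω‖ ^ 2 + 2 * inner ℝ d (Y ω)) (hYsq.add hinner)
      (integrable_const _), integral_add hYsq hinner,
    integral_const_mul, integral_inner (hY.integrable one_le_two), hY0]
  simp

variable {P : Measure Ω} {ν : Measure α}

section Independent

variable {X : ι → Ω → α}

theorem integral_inner_comp_eq_zero_of_iIndepFun [CompleteSpace E] [IsFiniteMeasure ν]
    (hX : ∀ i, Measurable (X i)) (hindep : iIndepFun X P) (hlaw : ∀ i, P.map (X i) = ν)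
    {g : α → E} (hg : MemLp g 2 ν) (hg0 : ∫ x, g x ∂ν = 0) {i j : ι} (hij : i ≠ j) :
    ∫ ω, inner ℝ (g (X i ω)) (g (X j ω)) ∂P = 0 := by
  have hgi : Integrable g (P.map (X i)) := (hlaw i).symm ▸ hg.integrable one_le_two
  have hgj : Integrable g (P.map (X j)) := (hlaw j).symm ▸ hg.integrable one_le_two
  have h := (hindep.indepFun hij).integral_bilin_comp_comp (hX i).aemeasurable
    (hX j).aemeasurable hgi hgj (innerSL ℝ)
  refine h.trans ?_
  simp [integral_comp_of_map_eq (hX i) (hlaw i) hg.1, hg0]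

theorem integral_norm_sq_sum_comp_of_iIndepFun [CompleteSpace E] [IsFiniteMeasure ν]
    (hX : ∀ i, Measurable (X i)) (hindep : iIndepFun X P) (hlaw : ∀ i, P.map (X i) = ν)
    {g : α → E} (hg : MemLp g 2 ν) (hg0 : ∫ x, g x ∂ν = 0) (s : Finset ι) :
    ∫ ω, ‖∑ i ∈ s, g (X i ω)‖ ^ 2 ∂P = #s * ∫ x, ‖g x‖ ^ 2 ∂ν := by
  have hgX : ∀ i, MemLp (fun ω => g (X i ω)) 2 P := fun i =>
    hg.comp_measurePreserving ⟨hX i, hlaw i⟩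
  have hint : ∀ i j, Integrable (fun ω => inner ℝ (g (X i ω)) (g (X j ω))) P := fun i j =>
    memLp_one_iff_integrable.1 ((innerSL ℝ).memLp_of_bilin 1 (hgX i) (hgX j))
  have hdiag : ∀ i ∈ s, ∫ ω, ∑ j ∈ s, inner ℝ (g (X i ω)) (g (X j ω)) ∂P
      = ∫ x, ‖g x‖ ^ 2 ∂ν := fun i hi => by
    rw [integral_finsetSum _ fun j _ => hint i j, sum_eq_single_of_mem i hi fun j _ hji =>
      integral_inner_comp_eq_zero_of_iIndepFun hX hindep hlaw hg hg0 hji.symm]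
    simp_rw [real_inner_self_eq_norm_sq]
    exact integral_comp_of_map_eq (hX i) (hlaw i) (hg.1.norm.pow 2)
  have hexpand : ∀ ω, ‖∑ i ∈ s, g (X i ω)‖ ^ 2
      = ∑ i ∈ s, ∑ j ∈ s, inner ℝ (g (X i ω)) (g (X j ω)) := fun ω => by
    rw [← real_inner_self_eq_norm_sq, sum_inner]
    simp_rw [inner_sum]
  simp_rw [hexpand]
  rw [integral_finsetSum _ fun i _ => integrable_finsetSum _ fun j _ => hint i j,
    sum_congr rfl hdiag, sum_const, nsmul_eq_mul]

end Independent

theorem tendstoInMeasure_inv_sqrt_smul_sum_sub [CompleteSpace E] [IsProbabilityMeasure P]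
    [IsProbabilityMeasure ν] {X : ℕ → Ω → α} (hX : ∀ i, Measurable (X i))
    (hindep : iIndepFun X P) (hlaw : ∀ i, P.map (X i) = ν) {f : ℕ → α → E} {b : ℕ → E}
    (hf : ∀ n, MemLp (f n) 2 ν) (hf0 : Tendsto (fun n => ∫ x, ‖f n x‖ ^ 2 ∂ν) atTop (𝓝 0))
    (hb : Tendsto (fun n : ℕ => √n • ∫ x, f n x ∂ν - b n) atTop (𝓝 0)) :
    TendstoInMeasure P (fun (n : ℕ) ω => (√n)⁻¹ • ∑ i ∈ range n, f n (X i ω) - b n) atTop 0 := by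
  set m : ℕ → E := fun n => ∫ x, f n x ∂ν
  set g : ℕ → α → E := fun n x => f n x - m n
  set Y : ℕ → Ω → E := fun n ω => (√n)⁻¹ • ∑ i ∈ range n, g n (X i ω)
  have hg : ∀ n, MemLp (g n) 2 ν := fun n => (hf n).sub (memLp_const _)
  have hg0 : ∀ n, ∫ x, g n x ∂ν = 0 := fun n => by
    simp [g, m, integral_sub ((hf n).integrable one_le_two) (integrable_const _)]
  have hgX : ∀ n i, MemLp (fun ω => g n (X i ω)) 2 P := fun n i =>
    (hg n).comp_measurePreserving ⟨hX i, hlaw i⟩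
  have hY : ∀ n, MemLp (Y n) 2 P := fun n =>
    (memLp_finsetSum _ fun i _ => hgX n i).const_smul _
  have hY0 : ∀ n, ∫ ω, Y n ω ∂P = 0 := fun n => by
    rw [integral_smul, integral_finsetSum _ fun i _ => (hgX n i).integrable one_le_two]
    simp [integral_comp_of_map_eq (hX _) (hlaw _) (hg n).1, hg0]
  have hYg : ∀ n, ∫ ω, ‖Y n ω‖ ^ 2 ∂P ≤ ∫ x, ‖g n x‖ ^ 2 ∂ν := fun n => by
    simp_rw [Y, norm_smul, mul_pow, integral_const_mul,
      integral_norm_sq_sum_comp_of_iIndepFun hX hindep hlaw (hg n) (hg0 n), card_range,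
      ← mul_assoc, norm_inv, Real.norm_eq_abs, abs_of_nonneg (Real.sqrt_nonneg _), inv_pow,
      Real.sq_sqrt (Nat.cast_nonneg n)]
    exact mul_le_of_le_one_left (integral_nonneg fun x => by positivity) inv_mul_le_one
  have hgf : ∀ n, ∫ x, ‖g n x‖ ^ 2 ∂ν ≤ ∫ x, ‖f n x‖ ^ 2 ∂ν := fun n => by
    have h := integral_norm_add_const_sq (hg n) (hg0 n) (m n)
    simp only [g, sub_add_cancel] at h
    rw [h]
    exact le_add_of_nonneg_right (sq_nonneg _)
  have hdecomp : (fun (n : ℕ) ω => (√n)⁻¹ • ∑ i ∈ range n, f n (X i ω) - b n)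
      = fun n ω => Y n ω + (√n • m n - b n) := by
    ext n ω
    simp only [Y, g, sum_sub_distrib, sum_const, card_range, smul_sub, ← Nat.cast_smul_eq_nsmul ℝ,
      smul_smul, inv_mul_eq_div, Real.div_sqrt]
    abel
  rw [hdecomp]
  refine tendstoInMeasure_zero_of_tendsto_integral_norm_sq (fun n => (hY n).add (memLp_const _)) ?_
  simp_rw [integral_norm_add_const_sq (hY _) (hY0 _)]
  have hbound := hf0.add (hb.norm.pow 2)
  rw [norm_zero, zero_pow two_ne_zero, add_zero] at hbound
  refine squeeze_zero (fun n => by positivity) (fun n => ?_) hbound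
  exact add_le_add_left ((hYg n).trans (hgf n)) _

end Probability

theorem asymptotic_differentiability_of_averages_general
    {Ω : Type*} [MeasurableSpace Ω] (P : Measure Ω) [IsProbabilityMeasure P]
    {α : Type*} [MeasurableSpace α] (ν : Measure α) [IsProbabilityMeasure ν]
    {k m : ℕ}
    (Θ : Set (EuclideanSpace ℝ (Fin k)))
    (θ0 : EuclideanSpace ℝ (Fin k)) (hθ0 : θ0 ∈ Θ)
    (ψ : α → EuclideanSpace ℝ (Fin k) → EuclideanSpace ℝ (Fin m))
    (hψmeas : ∀ θ, Measurable fun x => ψ x θ)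
    (hψsq : ∀ θ ∈ Θ, Integrable (fun x => ‖ψ x θ‖ ^ 2) ν)
    (X : ℕ → Ω → α) (hXmeas : ∀ i, Measurable (X i))
    (hindep : ProbabilityTheory.iIndepFun X P)
    (hlaw : ∀ i, Measure.map (X i) P = ν)
    (hcont : Tendsto (fun t : EuclideanSpace ℝ (Fin k) =>
        ∫ x, ‖ψ x (θ0 + t) - ψ x θ0‖ ^ 2 ∂ν) (𝓝 0) (𝓝 0))
    (c : EuclideanSpace ℝ (Fin k) →L[ℝ] EuclideanSpace ℝ (Fin m))
    (hdiff : HasFDerivAt (fun t => ∫ x, ψ x t ∂ν) c θ0)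
    (θseq : ℕ → EuclideanSpace ℝ (Fin k)) (hθseqΘ : ∀ n, θseq n ∈ Θ)
    (hbdd : ∃ C : ℝ, ∀ n : ℕ, Real.sqrt n * ‖θseq n - θ0‖ ≤ C) :
    TendstoInMeasure P
      (fun (n : ℕ) (ω : Ω) =>
        (Real.sqrt n)⁻¹ • ∑ i ∈ range n, ψ (X i ω) (θseq n)
          - (Real.sqrt n)⁻¹ • ∑ i ∈ range n, ψ (X i ω) θ0
          - Real.sqrt n • c (θseq n - θ0))
      atTop (fun _ => 0) := by
  obtain ⟨C, hC⟩ := hbdd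
  have hψL2 : ∀ θ ∈ Θ, MemLp (fun x => ψ x θ) 2 ν := fun θ hθ =>
    (memLp_two_iff_integrable_sq_norm (hψmeas θ).aestronglyMeasurable).2 (hψsq θ hθ)
  have hsqrt : Tendsto (fun n : ℕ => √(n : ℝ)) atTop atTop :=
    Real.tendsto_sqrt_atTop.comp tendsto_natCast_atTop_atTop
  have hscaled : IsBoundedUnder (· ≤ ·) atTop fun n : ℕ => ‖√(n : ℝ) • (θseq n - θ0)‖ :=
    isBoundedUnder_of ⟨C, fun n => by
      rw [norm_smul, Real.norm_of_nonneg (Real.sqrt_nonneg _)]; exact hC n⟩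
  have hθ : Tendsto θseq atTop (𝓝 θ0) := tendsto_of_isBoundedUnder_norm_smul_sub hsqrt hscaled
  have hL2 : Tendsto (fun n => ∫ x, ‖ψ x (θseq n) - ψ x θ0‖ ^ 2 ∂ν) atTop (𝓝 0) := by
    refine (hcont.comp (tendsto_sub_nhds_zero_iff.2 hθ)).congr fun n => ?_
    simp only [Function.comp_apply, add_sub_cancel]
  have hmean : Tendsto (fun n : ℕ => √(n : ℝ) • ∫ x, ψ x (θseq n) - ψ x θ0 ∂ν
      - √(n : ℝ) • c (θseq n - θ0)) atTop (𝓝 0) := by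
    refine (hdiff.tendsto_smul_sub_sub hθ hscaled).congr fun n => ?_
    rw [integral_sub ((hψL2 _ (hθseqΘ n)).integrable one_le_two)
      ((hψL2 _ hθ0).integrable one_le_two), smul_sub, smul_sub]
  refine (tendstoInMeasure_inv_sqrt_smul_sum_sub hXmeas hindep hlaw
    (f := fun n x => ψ x (θseq n) - ψ x θ0) (fun n => (hψL2 _ (hθseqΘ n)).sub (hψL2 _ hθ0))
    hL2 hmean).congr_left fun n => ae_of_all _ fun ω => ?_
  simp only [sum_sub_distrib, smul_sub]

/-- Lemma 2.1 of Klaassen–Putter: let `ψ : X × Θ → ℝᵐ` with `Θ ⊂ ℝᵏ` open and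
`θ₀ ∈ Θ`.  If `X₁, X₂, ...` are i.i.d. with law `ν = P_{θ₀}`,
`E‖ψ(X₁; θ₀ + ε) - ψ(X₁; θ₀)‖² → 0` as `ε → 0`, and
`ε ↦ E ψ(X₁; θ₀ + ε)` is differentiable at `0` with derivative `c`, then for
any sequence `θₙ` with `√n (θₙ - θ₀)` bounded,
`n^{-1/2} ∑ ψ(Xᵢ; θₙ) - n^{-1/2} ∑ ψ(Xᵢ; θ₀) - c √n (θₙ - θ₀) → 0` in
probability. -/
theorem asymptotic_differentiability_of_averages
    {Ω : Type*} [MeasurableSpace Ω] (P : Measure Ω) [IsProbabilityMeasure P]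
    {α : Type*} [MeasurableSpace α] (ν : Measure α) [IsProbabilityMeasure ν]
    {k m : ℕ}
    (Θ : Set (EuclideanSpace ℝ (Fin k))) (hΘ : IsOpen Θ)
    (θ0 : EuclideanSpace ℝ (Fin k)) (hθ0 : θ0 ∈ Θ)
    (ψ : α → EuclideanSpace ℝ (Fin k) → EuclideanSpace ℝ (Fin m))
    (hψmeas : ∀ θ, Measurable fun x => ψ x θ)
    (hψsq : ∀ θ ∈ Θ, Integrable (fun x => ‖ψ x θ‖ ^ 2) ν)
    (hmean0 : ∫ x, ψ x θ0 ∂ν = 0)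
    (X : ℕ → Ω → α) (hXmeas : ∀ i, Measurable (X i))
    (hindep : ProbabilityTheory.iIndepFun X P)
    (hlaw : ∀ i, Measure.map (X i) P = ν)
    (hcont : Tendsto (fun t : EuclideanSpace ℝ (Fin k) =>
        ∫ x, ‖ψ x (θ0 + t) - ψ x θ0‖ ^ 2 ∂ν) (𝓝 0) (𝓝 0))
    (c : EuclideanSpace ℝ (Fin k) →L[ℝ] EuclideanSpace ℝ (Fin m))
    (hdiff : HasFDerivAt (fun t => ∫ x, ψ x t ∂ν) c θ0)
    (θseq : ℕ → EuclideanSpace ℝ (Fin k)) (hθseqΘ : ∀ n, θseq n ∈ Θ)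
    (hbdd : ∃ C : ℝ, ∀ n : ℕ, Real.sqrt n * ‖θseq n - θ0‖ ≤ C) :
    TendstoInMeasure P
      (fun (n : ℕ) (ω : Ω) =>
        (Real.sqrt n)⁻¹ • ∑ i ∈ range n, ψ (X i ω) (θseq n)
          - (Real.sqrt n)⁻¹ • ∑ i ∈ range n, ψ (X i ω) θ0
          - Real.sqrt n • c (θseq n - θ0))
      atTop (fun _ => 0) :=
  asymptotic_differentiability_of_averages_general P ν Θ θ0 hθ0 ψ hψmeas hψsq X hXmeas hindep hlaw
    hcont c hdiff θseq hθseqΘ hbdd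
end

section
/- Let X_1,...,X_n be i.i.d. random variables with distribution function G on R having mean zero and finite nonzero variance σ². Define the weighted empirical G̃_n(ψ) = n^{-1} ∑_{i=1}^n {1 - X_i X̄_n / S_n²} ψ(X_i) where S_n² = n^{-1} ∑ X_j². Then for every ψ ∈ L²(G), √n (G̃_n(ψ) - ∫ψ dG - n^{-1} ∑_{i=1}^n [ψ(X_i) - ∫ψ dG - (Cov(ψ(X),X)/σ²) X_i]) → 0 in probability. -/
/-!
With `c = Cov(ψ(X), X) / σ²`, the quantity in question equals, exactly,
`√n X̄ₙ · (c - (n⁻¹ ∑ ψ(Xᵢ) Xᵢ) / Sₙ²)`. The first factor is bounded in probability by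
Chebyshev's inequality, since its variance is `σ²`; the second tends to `0` almost surely by
the strong law of large numbers, applied to `ψ(X) X` and to `X²`. A sequence bounded in
probability times one tending to `0` in probability tends to `0` in probability.
-/

open MeasureTheory Filter Finset ProbabilityTheory
open scoped Topology

section

variable {Ω ι : Type*} [MeasurableSpace Ω] {P : Measure Ω}

/-- `Yᵢ = O_P(1)`, i.e. the laws of the `Yᵢ` are tight. -/
def BoundedInProbability (P : Measure Ω) (Y : ι → Ω → ℝ) : Prop :=
  ∀ ε > 0, ∃ M : ℝ, ∀ i, P {ω | M ≤ |Y i ω|} ≤ ε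

lemma BoundedInProbability.of_variance_le [IsFiniteMeasure P] {Y : ι → Ω → ℝ} {C : ℝ}
    (hY : ∀ i, MemLp (Y i) 2 P) (hmean : ∀ i, P[Y i] = 0) (hvar : ∀ i, Var[Y i; P] ≤ C) :
    BoundedInProbability P Y := by
  intro ε hε
  have hlim : Tendsto (fun M : ℝ => ENNReal.ofReal (C / M ^ 2)) atTop (𝓝 0) := by
    simpa using ENNReal.tendsto_ofReal
      (tendsto_const_nhds.div_atTop (tendsto_pow_atTop two_ne_zero))
  obtain ⟨M, hM, hMε⟩ :=
    ((eventually_gt_atTop 0).and (ENNReal.tendsto_nhds_zero.1 hlim ε hε)).exists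
  refine ⟨M, fun i => ?_⟩
  calc P {ω | M ≤ |Y i ω|} ≤ ENNReal.ofReal (Var[Y i; P] / M ^ 2) := by
        simpa [hmean i] using meas_ge_le_variance_div_sq (hY i) hM
    _ ≤ ENNReal.ofReal (C / M ^ 2) := by gcongr; exact hvar i
    _ ≤ ε := hMε

lemma BoundedInProbability.tendstoInMeasure_mul {l : Filter ι} {Y Z : ι → Ω → ℝ}
    (hY : BoundedInProbability P Y) (hZ : TendstoInMeasure P Z l fun _ => 0) :
    TendstoInMeasure P (fun i ω => Y i ω * Z i ω) l fun _ => 0 := by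
  rw [tendstoInMeasure_iff_norm] at hZ ⊢
  intro ε hε
  refine ENNReal.tendsto_nhds_zero.2 fun δ hδ => ?_
  obtain ⟨M, hM⟩ := hY (δ / 2) (ENNReal.half_pos hδ.ne')
  have hM₁ : 0 < max M 1 := lt_max_of_lt_right one_pos
  filter_upwards [ENNReal.tendsto_nhds_zero.1 (hZ (ε / max M 1) (by positivity)) (δ / 2)
    (ENNReal.half_pos hδ.ne')] with i hi
  have hsub : {ω | ε ≤ ‖Y i ω * Z i ω - 0‖} ⊆
      {ω | M ≤ |Y i ω|} ∪ {ω | ε / max M 1 ≤ ‖Z i ω - 0‖} := by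
    intro ω hω
    by_contra! hout
    simp only [Set.mem_union, Set.mem_ofPred_eq, not_or, not_le, sub_zero,
      Real.norm_eq_abs] at hout hω
    have hlt := mul_lt_mul'' (hout.1.trans_le (le_max_left M 1)) hout.2
      (abs_nonneg _) (abs_nonneg _)
    rw [mul_div_cancel₀ _ hM₁.ne', ← abs_mul] at hlt
    exact hlt.not_ge hω
  calc P {ω | ε ≤ ‖Y i ω * Z i ω - 0‖}
      ≤ P {ω | M ≤ |Y i ω|} + P {ω | ε / max M 1 ≤ ‖Z i ω - 0‖} :=
        (measure_mono hsub).trans (measure_union_le _ _)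
    _ ≤ δ / 2 + δ / 2 := add_le_add (hM i) hi
    _ = δ := ENNReal.add_halves δ

lemma variance_sqrt_mul_average_le {X : ℕ → Ω → ℝ} {C : ℝ} (hX : ∀ i, MemLp (X i) 2 P)
    (hindep : Pairwise fun i j => IndepFun (X i) (X j) P) (hvar : ∀ i, Var[X i; P] ≤ C)
    (n : ℕ) : Var[fun ω => √n * ((n : ℝ)⁻¹ * ∑ i ∈ range n, X i ω); P] ≤ C := by
  have hsum : Var[fun ω => ∑ i ∈ range n, X i ω; P] ≤ n * C := by
    have h := IndepFun.variance_sum (s := range n) (fun i _ => hX i)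
      fun i _ j _ hij => hindep hij
    simp only [Finset.sum_fn] at h
    simpa [h] using Finset.sum_le_card_nsmul (range n) _ C fun i _ => hvar i
  have hC : 0 ≤ C := (variance_nonneg _ _).trans (hvar 0)
  rw [variance_const_mul, variance_const_mul, Real.sq_sqrt n.cast_nonneg]
  calc (n : ℝ) * ((n : ℝ)⁻¹ ^ 2 * Var[fun ω => ∑ i ∈ range n, X i ω; P])
      ≤ n * ((n : ℝ)⁻¹ ^ 2 * (n * C)) := by gcongr
    _ = ((n : ℝ) * (n : ℝ)⁻¹) ^ 2 * C := by ring
    _ ≤ C := mul_le_of_le_one_left hC (pow_le_one₀ (by positivity) mul_inv_le_one)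

lemma boundedInProbability_sqrt_mul_average [IsFiniteMeasure P] {X : ℕ → Ω → ℝ} {C : ℝ}
    (hX : ∀ i, MemLp (X i) 2 P) (hmean : ∀ i, P[X i] = 0)
    (hindep : Pairwise fun i j => IndepFun (X i) (X j) P) (hvar : ∀ i, Var[X i; P] ≤ C) :
    BoundedInProbability P fun (n : ℕ) ω => √n * ((n : ℝ)⁻¹ * ∑ i ∈ range n, X i ω) := by
  refine .of_variance_le (fun n => ?_) (fun n => ?_)
    (variance_sqrt_mul_average_le hX hindep hvar)
  · exact ((memLp_finsetSum _ fun i _ => hX i).const_mul _).const_mul _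
  · simp [integral_const_mul, hmean,
      integral_finsetSum _ fun i _ => (hX i).integrable one_le_two]

lemma tendsto_ae_inv_mul_sum_comp {α : Type*} [MeasurableSpace α] {X : ℕ → Ω → α}
    (hindep : iIndepFun X P) (hident : ∀ i, IdentDistrib (X i) (X 0) P P)
    {g : α → ℝ} (hg : Measurable g) (hint : Integrable (g ∘ X 0) P) :
    ∀ᵐ ω ∂P, Tendsto (fun n : ℕ => (n : ℝ)⁻¹ * ∑ i ∈ range n, g (X i ω)) atTop
      (𝓝 (∫ ω, g (X 0 ω) ∂P)) := by
  have hslln := strong_law_ae_real (fun i ω => g (X i ω)) hint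
    (fun i j hij => (hindep.comp (fun _ => g) fun _ => hg).indepFun hij)
    fun i => (hident i).comp hg
  simpa only [div_eq_inv_mul] using hslln

end

lemma sqrt_mul_weighted_average_sub_eq (x : ℕ → ℝ) (ψ : ℝ → ℝ) (m c : ℝ) (n : ℕ) :
    √n * ((n : ℝ)⁻¹ * ∑ i ∈ range n,
          (1 - x i * ((n : ℝ)⁻¹ * ∑ j ∈ range n, x j)
            / ((n : ℝ)⁻¹ * ∑ j ∈ range n, x j ^ 2)) * ψ (x i)
        - m - (n : ℝ)⁻¹ * ∑ i ∈ range n, (ψ (x i) - m - c * x i)) =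
      √n * ((n : ℝ)⁻¹ * ∑ i ∈ range n, x i) *
        (c - ((n : ℝ)⁻¹ * ∑ i ∈ range n, ψ (x i) * x i)
          / ((n : ℝ)⁻¹ * ∑ i ∈ range n, x i ^ 2)) := by
  rcases eq_or_ne n 0 with rfl | hn
  · simp
  have hweights : ∑ i ∈ range n, x i * ((n : ℝ)⁻¹ * ∑ j ∈ range n, x j)
        / ((n : ℝ)⁻¹ * ∑ j ∈ range n, x j ^ 2) * ψ (x i) =
      ((n : ℝ)⁻¹ * ∑ j ∈ range n, x j) / ((n : ℝ)⁻¹ * ∑ j ∈ range n, x j ^ 2) *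
        ∑ i ∈ range n, ψ (x i) * x i :=
    (sum_congr rfl fun i _ => by ring).trans (mul_sum _ _ _).symm
  simp only [sub_mul, one_mul, sum_sub_distrib, ← mul_sum, sum_const, card_range,
    nsmul_eq_mul, hweights]
  linear_combination (√n * m) * inv_mul_cancel₀ (Nat.cast_ne_zero.2 hn : (n : ℝ) ≠ 0)

theorem weighted_empirical_efficient_influence_general
    {Ω : Type*} [MeasurableSpace Ω] (P : Measure Ω) [IsProbabilityMeasure P]
    (X : ℕ → Ω → ℝ) (hmeas : ∀ i, Measurable (X i))
    (hindep : ProbabilityTheory.iIndepFun X P)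
    (hident : ∀ i, ProbabilityTheory.IdentDistrib (X i) (X 0) P P)
    (ν : Measure ℝ) (hν : ν = Measure.map (X 0) P)
    (hmean : ∫ x, x ∂ν = 0)
    (σ2 : ℝ) (hσ2 : σ2 = ∫ x, x ^ 2 ∂ν) (hσ2pos : 0 < σ2)
    (hvarint : Integrable (fun x => x ^ 2) ν)
    (ψ : ℝ → ℝ) (hψmeas : Measurable ψ)
    (hψXint : Integrable (fun x => ψ x * x) ν) :
    TendstoInMeasure P
      (fun (n : ℕ) (ω : Ω) =>
        Real.sqrt n *
          ((n : ℝ)⁻¹ * ∑ i ∈ range n,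
              (1 - X i ω * ((n : ℝ)⁻¹ * ∑ j ∈ range n, X j ω)
                  / ((n : ℝ)⁻¹ * ∑ j ∈ range n, X j ω ^ 2)) * ψ (X i ω)
            - ∫ x, ψ x ∂ν
            - (n : ℝ)⁻¹ * ∑ i ∈ range n,
                (ψ (X i ω) - ∫ x, ψ x ∂ν
                  - ((∫ x, ψ x * x ∂ν) / σ2) * X i ω)))
      atTop (fun _ => 0) := by
  subst hν
  have hX0 : AEMeasurable (X 0) P := (hmeas 0).aemeasurable
  have hintegral {g : ℝ → ℝ} (hg : Measurable g) :
      ∫ x, g x ∂P.map (X 0) = ∫ ω, g (X 0 ω) ∂P :=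
    integral_map hX0 hg.aestronglyMeasurable
  obtain rfl : σ2 = ∫ ω, X 0 ω ^ 2 ∂P := hσ2.trans (hintegral (by fun_prop))
  rw [hintegral (g := fun x => ψ x * x) (by fun_prop)]
  have hL2 : MemLp (X 0) 2 P :=
    (memLp_two_iff_integrable_sq hX0.aestronglyMeasurable).2 (hvarint.comp_aemeasurable hX0)
  have hY := boundedInProbability_sqrt_mul_average (fun i => (hident i).memLp_iff.2 hL2)
    (fun i => (hident i).integral_eq.trans ((hintegral measurable_id).symm.trans hmean))
    (fun i j hij => hindep.indepFun hij) fun i => (hident i).variance_eq.le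
  have hZ : TendstoInMeasure P (fun (n : ℕ) ω =>
      (∫ ω', ψ (X 0 ω') * X 0 ω' ∂P) / (∫ ω', X 0 ω' ^ 2 ∂P) -
        ((n : ℝ)⁻¹ * ∑ i ∈ range n, ψ (X i ω) * X i ω) /
          ((n : ℝ)⁻¹ * ∑ i ∈ range n, X i ω ^ 2)) atTop fun _ => 0 := by
    refine tendstoInMeasure_of_tendsto_ae
      (fun n => (by fun_prop : Measurable _).aestronglyMeasurable) ?_
    filter_upwards [tendsto_ae_inv_mul_sum_comp hindep hident (g := fun x => ψ x * x)
        (by fun_prop) (hψXint.comp_aemeasurable hX0),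
      tendsto_ae_inv_mul_sum_comp hindep hident (g := fun x => x ^ 2)
        (by fun_prop) (hvarint.comp_aemeasurable hX0)] with ω hψX hX2
    have hlim := (hψX.div hX2 hσ2pos.ne').const_sub
      ((∫ ω', ψ (X 0 ω') * X 0 ω' ∂P) / ∫ ω', X 0 ω' ^ 2 ∂P)
    rwa [sub_self] at hlim
  refine (hY.tendstoInMeasure_mul hZ).congr_left fun n => ae_of_all _ fun ω => ?_
  exact (sqrt_mul_weighted_average_sub_eq (X · ω) ψ _ _ n).symm

/-- The computation underlying Proposition 6.2 of Klaassen–Putter (location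
known, `θ = 0`): if `X₁, ..., Xₙ` are i.i.d. with law `G` of mean zero and
finite nonzero variance `σ²`, and
`G̃ₙ(ψ) = n⁻¹ ∑ {1 - Xᵢ X̄ₙ / Sₙ²} ψ(Xᵢ)` with `Sₙ² = n⁻¹ ∑ Xⱼ²`, then for
every `ψ ∈ L²(G)`,
`√n (G̃ₙ(ψ) - ∫ψ dG - n⁻¹ ∑ [ψ(Xᵢ) - ∫ψ dG - (Cov(ψ(X), X)/σ²) Xᵢ]) → 0`
in probability. -/
theorem weighted_empirical_efficient_influence
    {Ω : Type*} [MeasurableSpace Ω] (P : Measure Ω) [IsProbabilityMeasure P]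
    (X : ℕ → Ω → ℝ) (hmeas : ∀ i, Measurable (X i))
    (hindep : ProbabilityTheory.iIndepFun X P)
    (hident : ∀ i, ProbabilityTheory.IdentDistrib (X i) (X 0) P P)
    (ν : Measure ℝ) (hν : ν = Measure.map (X 0) P)
    (hmean : ∫ x, x ∂ν = 0)
    (σ2 : ℝ) (hσ2 : σ2 = ∫ x, x ^ 2 ∂ν) (hσ2pos : 0 < σ2)
    (hvarint : Integrable (fun x => x ^ 2) ν)
    (ψ : ℝ → ℝ) (hψmeas : Measurable ψ)
    (hψsq : Integrable (fun x => ψ x ^ 2) ν)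
    (hψXint : Integrable (fun x => ψ x * x) ν) :
    TendstoInMeasure P
      (fun (n : ℕ) (ω : Ω) =>
        Real.sqrt n *
          ((n : ℝ)⁻¹ * ∑ i ∈ range n,
              (1 - X i ω * ((n : ℝ)⁻¹ * ∑ j ∈ range n, X j ω)
                  / ((n : ℝ)⁻¹ * ∑ j ∈ range n, X j ω ^ 2)) * ψ (X i ω)
            - ∫ x, ψ x ∂ν
            - (n : ℝ)⁻¹ * ∑ i ∈ range n,
                (ψ (X i ω) - ∫ x, ψ x ∂ν
                  - ((∫ x, ψ x * x ∂ν) / σ2) * X i ω)))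
      atTop (fun _ => 0) :=
  weighted_empirical_efficient_influence_general P X hmeas hindep hident ν hν hmean σ2 hσ2 hσ2pos
    hvarint ψ hψmeas hψXint
end
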